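/- Let G be a group with a factorial automatic structure L₁ ⊆ A* for π₁ : A* → G and an automatic structure L₂ ⊆ B* for π₂ : B* → G, and let φ be an endomorphism of G such that the FT-BRP holds for (φ, L₁, L₂). Then the image subgroup Gφ is L₂-quasiconvex. -/
import Mathlib


open scoped NNReal

namespace Auto

/-- The generating set `Aπ ∪ (Aπ)⁻¹` of `G` determined by `π : A* → G`. -/
def gens {A G : Type*} [Group G] (π : FreeMonoid A →* G) : Set G :=
  (Set.range fun a : A => π (FreeMonoid.of a)) ∪
    Set.range fun a : A => (π (FreeMonoid.of a))⁻¹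

/-- The word metric `d_A` on `G`: the least `n` such that `g⁻¹h` is a product of `n`
elements of `Aπ ∪ (Aπ)⁻¹`. -/
noncomputable def wdist {A G : Type*} [Group G] (π : FreeMonoid A →* G) (g h : G) : ℕ :=
  sInf {n : ℕ | ∃ l : List G, l.length = n ∧ (∀ x ∈ l, x ∈ gens π) ∧ l.prod = g⁻¹ * h}

/-- Evaluation of a word of `A*` in `G`. -/
def evalW {A G : Type*} [Group G] (π : FreeMonoid A →* G) (w : List A) : G :=
  π (FreeMonoid.ofList w)

/-- `u` and `v` `p`-fellow travel: `d_A(u^[n]π, v^[n]π) ≤ p` for all `n`. -/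
def FellowTravel {A G : Type*} [Group G] (π : FreeMonoid A →* G) (p : ℝ≥0)
    (u v : List A) : Prop :=
  ∀ n : ℕ, (wdist π (evalW π (u.take n)) (evalW π (v.take n)) : ℝ≥0) ≤ p

/-- `u` and `v` are `p`-meeting-fellow-travellers. -/
def MFT {A G : Type*} [Group G] (π : FreeMonoid A →* G) (p : ℝ≥0) (u v : List A) : Prop :=
  FellowTravel π p u v ∧ evalW π u = evalW π v

/-- A language is regular if it is accepted by a finite-state automaton. -/
def IsRegular {A : Type*} (L : Language A) : Prop :=
  ∃ (σ : Type) (_ : Fintype σ) (M : DFA A σ), M.accepts = L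

/-- `L` is an automatic structure for `π`. -/
structure IsAutomaticStructure {A G : Type*} [Group G] (π : FreeMonoid A →* G)
    (L : Language A) : Prop where
  regular : IsRegular L
  onto : ∀ g : G, ∃ w ∈ L, evalW π w = g
  ft : ∃ N : ℕ, ∀ u ∈ L, ∀ v ∈ L,
    wdist π (evalW π u) (evalW π v) ≤ 1 → FellowTravel π N u v

/-- Evaluation of an element of `A ∪ {ε}`. -/
def evalOpt {A G : Type*} [Group G] (π : FreeMonoid A →* G) : Option A → G
  | none => 1
  | some a => π (FreeMonoid.of a)

/-- `L` is a biautomatic structure for `π`. -/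
structure IsBiautomaticStructure {A G : Type*} [Group G] (π : FreeMonoid A →* G)
    (L : Language A) extends IsAutomaticStructure π L : Prop where
  bi : ∃ N : ℕ, ∀ u ∈ L, ∀ v ∈ L, ∀ a : Option A,
    evalW π v = evalOpt π a * evalW π u →
    ∀ n : ℕ, wdist π (evalOpt π a * evalW π (u.take n)) (evalW π (v.take n)) ≤ N

/-- A language is factorial if it is closed under taking factors. -/
def IsFactorial {A : Type*} (L : Language A) : Prop :=
  ∀ u ∈ L, ∀ v : List A, v <:+: u → v ∈ L

/-- `D : ℝ≥0 → ℝ≥0` is a departure function for `(G, L)`. -/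
def IsDepartureFunction {A G : Type*} [Group G] (π : FreeMonoid A →* G) (L : Language A)
    (D : ℝ≥0 → ℝ≥0) : Prop :=
  ∀ w ∈ L, ∀ r : ℝ≥0, ∀ s t : ℕ, D r ≤ (t : ℝ≥0) → s + t ≤ w.length →
    r < (wdist π (evalW π (w.take s)) (evalW π (w.take (s + t))) : ℝ≥0)

/-- Every point of `S` is within distance `N` of `T`. -/
def NbhdIn {A G : Type*} [Group G] (π : FreeMonoid A →* G) (N : ℕ) (S T : Set G) : Prop :=
  ∀ s ∈ S, ∃ t ∈ T, wdist π s t ≤ N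

/-- The Hausdorff distance between `S` and `T` is at most `N`. -/
def HausdorffLE {A G : Type*} [Group G] (π : FreeMonoid A →* G) (N : ℕ)
    (S T : Set G) : Prop :=
  NbhdIn π N S T ∧ NbhdIn π N T S

/-- `H` is an `L`-quasiconvex subgroup of `G`. -/
def IsQuasiconvex {A G : Type*} [Group G] (π : FreeMonoid A →* G) (L : Language A)
    (H : Subgroup G) : Prop :=
  ∃ k : ℕ, ∀ h ∈ H, ∀ h' ∈ H, ∀ w ∈ L, h * evalW π w = h' →
    ∀ n : ℕ, ∃ z ∈ H, wdist π (h * evalW π (w.take n)) z ≤ k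

/-- The bounded reduction property for `(φ, L, L')`. -/
def BRP {A B G G' : Type*} [Group G] [Group G'] (π : FreeMonoid A →* G)
    (π' : FreeMonoid B →* G') (φ : G →* G') (L : Language A) (L' : Language B) : Prop :=
  ∃ N : ℕ, ∀ x : G, ∀ α ∈ L, ∀ β ∈ L', evalW π' β = φ (evalW π α) →
    HausdorffLE π' N (Set.range fun n : ℕ => φ (x * evalW π (α.take n)))
      (Set.range fun n : ℕ => φ x * evalW π' (β.take n))

/-- The synchronous bounded reduction property for `(φ, L, L')`. -/
def SyncBRP {A B G G' : Type*} [Group G] [Group G'] (π : FreeMonoid A →* G)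
    (π' : FreeMonoid B →* G') (φ : G →* G') (L : Language A) (L' : Language B) : Prop :=
  ∃ N : ℕ, ∀ x : G, ∀ α ∈ L, ∀ β ∈ L', evalW π' β = φ (evalW π α) →
    ∀ n : ℕ, wdist π' (φ (x * evalW π (α.take n))) (φ x * evalW π' (β.take n)) ≤ N

/-- The fellow traveller bounded reduction property (FT-BRP) for `(φ, L, L')`. -/
def FTBRP {A B G G' : Type*} [Group G] [Group G'] (π : FreeMonoid A →* G)
    (π' : FreeMonoid B →* G') (φ : G →* G') (L : Language A) (L' : Language B) : Prop :=
  ∀ p : ℝ≥0, ∃ q : ℝ≥0,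
    ∀ u₁ ∈ L, ∀ u₂ ∈ L, ∀ u₃ ∈ L, ∀ u₁' ∈ L', ∀ u₂' ∈ L', ∀ u₃' ∈ L',
      evalW π' u₁' = φ (evalW π u₁) → evalW π' u₂' = φ (evalW π u₂) →
        evalW π' u₃' = φ (evalW π u₃) →
          MFT π p (u₁ ++ u₂) u₃ → MFT π' q (u₁' ++ u₂') u₃'

/-- The natural homomorphism `(A ⊔ B)* → G` agreeing with `π₁` on `A` and `π₂` on `B`. -/
def sumHom {A B G : Type*} [Group G] (π₁ : FreeMonoid A →* G) (π₂ : FreeMonoid B →* G) :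
    FreeMonoid (A ⊕ B) →* G :=
  FreeMonoid.lift (Sum.elim (fun a => π₁ (FreeMonoid.of a)) fun b => π₂ (FreeMonoid.of b))

/-- The union `L₁ ∪ L₂` viewed as a language over `A ⊔ B`. -/
def unionLang {A B : Type*} (L₁ : Language A) (L₂ : Language B) : Language (A ⊕ B) :=
  {w : List (A ⊕ B) | (∃ u ∈ L₁, w = u.map Sum.inl) ∨ ∃ v ∈ L₂, w = v.map Sum.inr}

/-- `L` is an asynchronous automatic structure for `π`. -/
def IsAsyncAutomaticStructure {A G : Type*} [Group G] (π : FreeMonoid A →* G)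
    (L : Language A) : Prop :=
  IsRegular L ∧ (∀ g : G, ∃ w ∈ L, evalW π w = g) ∧
    ∃ p : ℕ, ∀ u ∈ L, ∀ v ∈ L, wdist π (evalW π u) (evalW π v) ≤ 1 →
      ∃ φ ψ : ℕ → ℕ, Monotone φ ∧ Monotone ψ ∧
        Function.Surjective φ ∧ Function.Surjective ψ ∧
          ∀ t : ℕ, wdist π (evalW π (u.take (φ t))) (evalW π (v.take (ψ t))) ≤ p

/-- `L₁` and `L₂` are equivalent automatic structures. -/
def LangEquivalent {A B G : Type*} [Group G] (π₁ : FreeMonoid A →* G)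
    (π₂ : FreeMonoid B →* G) (L₁ : Language A) (L₂ : Language B) : Prop :=
  IsAsyncAutomaticStructure (sumHom π₁ π₂) (unionLang L₁ L₂)

/-- `L₁` and `L₂` are synchronously equivalent automatic structures. -/
def LangSyncEquivalent {A B G : Type*} [Group G] (π₁ : FreeMonoid A →* G)
    (π₂ : FreeMonoid B →* G) (L₁ : Language A) (L₂ : Language B) : Prop :=
  IsAutomaticStructure (sumHom π₁ π₂) (unionLang L₁ L₂)

/-- `L` has the Hausdorff closeness property. -/
def HausClose {A G : Type*} [Group G] (π : FreeMonoid A →* G) (L : Language A) : Prop :=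
  ∃ N : ℕ, ∀ u ∈ L, ∀ v ∈ L, wdist π (evalW π u) (evalW π v) ≤ 1 →
    HausdorffLE π N (Set.range fun n : ℕ => evalW π (u.take n))
      (Set.range fun n : ℕ => evalW π (v.take n))

/-- The padded alphabet `C = (A×B) ∪ (A×{$}) ∪ ({$}×B)` of convolution. -/
abbrev ConvAlphabet (A B : Type*) := (A × B) ⊕ (A ⊕ B)

/-- The convolution `u ⋄ v` of two words. -/
def conv {A B : Type*} : List A → List B → List (ConvAlphabet A B)
  | [], [] => []
  | [], b :: v => Sum.inr (Sum.inr b) :: conv [] v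
  | a :: u, [] => Sum.inr (Sum.inl a) :: conv u []
  | a :: u, b :: v => Sum.inl (a, b) :: conv u v
  termination_by u v => u.length + v.length

/-- The convolution `L₁ ⋄ L₂` of two languages. -/
def convLang {A B : Type*} (L₁ : Language A) (L₂ : Language B) :
    Language (ConvAlphabet A B) :=
  {w : List (ConvAlphabet A B) | ∃ u ∈ L₁, ∃ v ∈ L₂, w = conv u v}

/-- The natural homomorphism `C* → G × G'` for the convolution alphabet. -/
def convHom {A B G G' : Type*} [Group G] [Group G'] (π₁ : FreeMonoid A →* G)
    (π₂ : FreeMonoid B →* G') : FreeMonoid (ConvAlphabet A B) →* G × G' :=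
  FreeMonoid.lift fun c =>
    match c with
    | Sum.inl (a, b) => (π₁ (FreeMonoid.of a), π₂ (FreeMonoid.of b))
    | Sum.inr (Sum.inl a) => (π₁ (FreeMonoid.of a), 1)
    | Sum.inr (Sum.inr b) => (1, π₂ (FreeMonoid.of b))

/-- A group is automatic if it admits an automatic structure over some finite alphabet. -/
def IsAutomaticGroup (G : Type*) [Group G] : Prop :=
  ∃ (A : Type) (_ : Fintype A) (π : FreeMonoid A →* G) (L : Language A),
    IsAutomaticStructure π L

end Auto

open Auto

namespace Auto

section WdistHelpers

variable {A G : Type*} [Group G] (π : FreeMonoid A →* G)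

lemma evalW_nil : evalW π ([] : List A) = 1 := map_one π

lemma evalW_append (u v : List A) :
    evalW π (u ++ v) = evalW π u * evalW π v := by
  rw [evalW, evalW, evalW, ← map_mul]; rfl

lemma evalW_singleton (a : A) : evalW π [a] = π (FreeMonoid.of a) := rfl

lemma prod_map_eval (w : List A) :
    (w.map fun a => π (FreeMonoid.of a)).prod = evalW π w := by
  induction w with
  | nil => simp [evalW_nil]
  | cons a t ih =>
    rw [show a :: t = [a] ++ t from rfl, List.map_append, List.prod_append, ih,
      evalW_append, List.map_singleton, List.prod_singleton, evalW_singleton]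

lemma mem_gens_of (a : A) : π (FreeMonoid.of a) ∈ gens π :=
  (Set.mem_union _ _ _).mpr (Or.inl ⟨a, rfl⟩)

lemma mem_gens_inv {x : G} (hx : x ∈ gens π) : x⁻¹ ∈ gens π := by
  rcases hx with ⟨a, rfl⟩ | ⟨a, rfl⟩
  · exact (Set.mem_union _ _ _).mpr (Or.inr ⟨a, rfl⟩)
  · exact (Set.mem_union _ _ _).mpr (Or.inl ⟨a, by simp⟩)

lemma wdist_le {g h : G} {l : List G} (hl : ∀ x ∈ l, x ∈ gens π)
    (hp : l.prod = g⁻¹ * h) : wdist π g h ≤ l.length :=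
  Nat.sInf_le ⟨l, rfl, hl, hp⟩

variable {π}

lemma wdist_exists (hrep : ∀ g : G, ∃ l : List G, (∀ x ∈ l, x ∈ gens π) ∧ l.prod = g)
    (g h : G) :
    ∃ l : List G, l.length = wdist π g h ∧ (∀ x ∈ l, x ∈ gens π) ∧ l.prod = g⁻¹ * h := by
  have hne : {n : ℕ | ∃ l : List G, l.length = n ∧ (∀ x ∈ l, x ∈ gens π) ∧
      l.prod = g⁻¹ * h}.Nonempty := by
    obtain ⟨l, hl, hp⟩ := hrep (g⁻¹ * h)
    exact ⟨l.length, l, rfl, hl, hp⟩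
  exact Nat.sInf_mem hne

lemma wdist_triangle (hrep : ∀ g : G, ∃ l : List G, (∀ x ∈ l, x ∈ gens π) ∧ l.prod = g)
    (g h k : G) : wdist π g k ≤ wdist π g h + wdist π h k := by
  obtain ⟨l₁, hl₁, hg₁, hp₁⟩ := wdist_exists hrep g h
  obtain ⟨l₂, hl₂, hg₂, hp₂⟩ := wdist_exists hrep h k
  have hle : wdist π g k ≤ (l₁ ++ l₂).length := by
    refine wdist_le π ?_ ?_
    · intro x hx; rcases List.mem_append.mp hx with hx | hx
      · exact hg₁ x hx
      · exact hg₂ x hx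
    · rw [List.prod_append, hp₁, hp₂]; group
  simpa [hl₁, hl₂] using hle

lemma wdist_comm (hrep : ∀ g : G, ∃ l : List G, (∀ x ∈ l, x ∈ gens π) ∧ l.prod = g)
    (g h : G) : wdist π g h = wdist π h g := by
  have key : ∀ a b : G, wdist π a b ≤ wdist π b a := by
    intro a b
    obtain ⟨l, hl, hgens, hp⟩ := wdist_exists hrep b a
    have hle : wdist π a b ≤ ((l.map Inv.inv).reverse).length := by
      refine wdist_le π ?_ ?_
      · intro x hx
        rw [List.mem_reverse, List.mem_map] at hx
        obtain ⟨y, hy, rfl⟩ := hx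
        exact mem_gens_inv π (hgens y hy)
      · rw [← List.prod_inv_reverse, hp]; group
    simpa [hl] using hle
  exact le_antisymm (key g h) (key h g)

lemma wdist_mul_left (a g h : G) : wdist π (a * g) (a * h) = wdist π g h := by
  have hgh : (a * g)⁻¹ * (a * h) = g⁻¹ * h := by group
  simp only [wdist, hgh]

lemma wdist_take (v : List A) (n : ℕ) :
    wdist π (evalW π (v.take n)) (evalW π v) ≤ v.length := by
  have hle : wdist π (evalW π (v.take n)) (evalW π v) ≤
      ((v.drop n).map fun a => π (FreeMonoid.of a)).length := by
    refine wdist_le π ?_ ?_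
    · intro x hx
      rw [List.mem_map] at hx
      obtain ⟨b, _, rfl⟩ := hx
      exact mem_gens_of π b
    · rw [prod_map_eval]
      have hv : evalW π v = evalW π (v.take n) * evalW π (v.drop n) := by
        conv_lhs => rw [← List.take_append_drop n v, evalW_append]
      rw [hv]
      group
  refine le_trans hle ?_
  simp

lemma MFT_self (u : List A) : MFT π 0 u u := by
  refine ⟨fun n => ?_, rfl⟩
  have h0 : wdist π (evalW π (u.take n)) (evalW π (u.take n)) ≤ ([] : List G).length :=
    wdist_le π (by simp) (by simp)
  simp only [List.length_nil, Nat.le_zero] at h0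
  simp [h0]

lemma ft_chain {L : Language A}
    (hrep : ∀ g : G, ∃ l : List G, (∀ x ∈ l, x ∈ gens π) ∧ l.prod = g)
    (honto : ∀ g : G, ∃ w ∈ L, evalW π w = g) {N : ℕ}
    (hN : ∀ u ∈ L, ∀ v ∈ L, wdist π (evalW π u) (evalW π v) ≤ 1 →
      ∀ j, wdist π (evalW π (u.take j)) (evalW π (v.take j)) ≤ N) :
    ∀ (C : ℕ) (u v : List A), u ∈ L → v ∈ L → wdist π (evalW π u) (evalW π v) ≤ C →
      ∀ j, wdist π (evalW π (u.take j)) (evalW π (v.take j)) ≤ C * N + N := by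
  intro C
  induction C with
  | zero =>
    intro u v hu hv hd j
    simpa using hN u hu v hv (le_trans hd (by norm_num)) j
  | succ C ih =>
    intro u v hu hv hd j
    obtain ⟨l, hlen, hgens, hp⟩ := wdist_exists hrep (evalW π u) (evalW π v)
    cases l with
    | nil =>
      have heq : evalW π u = evalW π v := by
        have h1 : (1 : G) = (evalW π u)⁻¹ * evalW π v := by simpa using hp
        rw [eq_comm, inv_mul_eq_one] at h1
        exact h1
      have hdle : wdist π (evalW π u) (evalW π v) ≤ 1 := by
        have h0 : wdist π (evalW π u) (evalW π v) ≤ ([] : List G).length :=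
          wdist_le π (by simp) (by simp [heq])
        simpa using Nat.le_succ_of_le h0
      exact le_trans (hN u hu v hv hdle j) (Nat.le_add_left N ((C + 1) * N))
    | cons x t =>
      have htlen : t.length ≤ C := by
        simp only [List.length_cons] at hlen
        omega
      set g₁ := evalW π u * x with hg₁
      obtain ⟨u₁, hu₁L, hu₁E⟩ := honto g₁
      have hd1 : wdist π (evalW π u) (evalW π u₁) ≤ 1 := by
        rw [hu₁E]
        have h1 : wdist π (evalW π u) g₁ ≤ ([x] : List G).length := by
          refine wdist_le π ?_ ?_
          · intro y hy
            simp only [List.mem_singleton] at hy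
            subst hy
            exact hgens y (by simp)
          · rw [List.prod_singleton, hg₁]
            group
        simpa using h1
      have hd2 : wdist π (evalW π u₁) (evalW π v) ≤ C := by
        rw [hu₁E]
        have hle : wdist π g₁ (evalW π v) ≤ t.length := by
          refine wdist_le π ?_ ?_
          · intro y hy
            exact hgens y (by simp [hy])
          · have hx : t.prod = x⁻¹ * ((evalW π u)⁻¹ * evalW π v) := by
              rw [← hp, List.prod_cons, inv_mul_cancel_left]
            rw [hx, hg₁, mul_inv_rev, mul_assoc]
        exact le_trans hle htlen
      have h1 := hN u hu u₁ hu₁L hd1 j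
      have h2 := ih u₁ v hu₁L hv hd2 j
      have htri := wdist_triangle hrep (evalW π (u.take j)) (evalW π (u₁.take j))
        (evalW π (v.take j))
      have : wdist π (evalW π (u.take j)) (evalW π (v.take j)) ≤ N + (C * N + N) :=
        le_trans htri (Nat.add_le_add h1 h2)
      refine le_trans this (le_of_eq ?_)
      ring

end WdistHelpers

end Auto



/-- For a factorial automatic structure `L₁` and an automatic structure `L₂`,
the FT-BRP for `(φ, L₁, L₂)` implies that the image subgroup `Gφ` is `L₂`-quasiconvex. -/
theorem ftbrp_image_quasiconvex {A B G : Type*} [Fintype A] [Fintype B] [Group G]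
    (π₁ : FreeMonoid A →* G) (π₂ : FreeMonoid B →* G)
    (L₁ : Language A) (L₂ : Language B)
    (h₁ : IsAutomaticStructure π₁ L₁) (hfac : IsFactorial L₁)
    (h₂ : IsAutomaticStructure π₂ L₂)
    (φ : G →* G) (hft : FTBRP π₁ π₂ φ L₁ L₂) :
    IsQuasiconvex π₂ L₂ φ.range := by
  classical
  choose Wd hWdL hWdE using h₂.onto
  have hrep : ∀ g : G, ∃ l : List G, (∀ x ∈ l, x ∈ gens π₂) ∧ l.prod = g := by
    intro g
    refine ⟨(Wd g).map fun b => π₂ (FreeMonoid.of b), ?_, ?_⟩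
    · intro y hy
      rw [List.mem_map] at hy
      obtain ⟨b, _, rfl⟩ := hy
      exact mem_gens_of π₂ b
    · rw [prod_map_eval, hWdE]
  obtain ⟨N₂, hN₂r⟩ := h₂.ft
  have hN₂ : ∀ u ∈ L₂, ∀ v ∈ L₂, wdist π₂ (evalW π₂ u) (evalW π₂ v) ≤ 1 →
      ∀ j, wdist π₂ (evalW π₂ (u.take j)) (evalW π₂ (v.take j)) ≤ N₂ := by
    intro u hu v hv hd j
    exact_mod_cast hN₂r u hu v hv hd j
  obtain ⟨q, hq⟩ := hft 0
  obtain ⟨Q, hQ⟩ : ∃ Q : ℕ, q ≤ (Q : ℝ≥0) := ⟨⌈q⌉₊, Nat.le_ceil q⟩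
  obtain ⟨C, hC⟩ : ∃ C : ℕ, ∀ a : A, wdist π₂ 1 (φ (π₁ (FreeMonoid.of a))) ≤ C :=
    ⟨Finset.univ.sup fun a : A => wdist π₂ 1 (φ (π₁ (FreeMonoid.of a))),
      fun a => Finset.le_sup (f := fun a : A => wdist π₂ 1 (φ (π₁ (FreeMonoid.of a))))
        (Finset.mem_univ a)⟩
  refine ⟨Q + (Wd 1).length + (C * N₂ + N₂), ?_⟩
  intro h hh h' hh' w hw hprod n
  obtain ⟨g, rfl⟩ := MonoidHom.mem_range.mp hh
  obtain ⟨g', rfl⟩ := MonoidHom.mem_range.mp hh'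
  have hwx : evalW π₂ w = φ (g⁻¹ * g') := by
    rw [map_mul, map_inv, ← hprod]
    group
  obtain ⟨u₃, hu₃L, hu₃E⟩ := h₁.onto (g⁻¹ * g')
  have key : ∀ m : ℕ,
      MFT π₂ q (Wd (φ (evalW π₁ (u₃.take m))) ++ Wd (φ (evalW π₁ (u₃.drop m)))) w := by
    intro m
    refine hq (u₃.take m) ?_ (u₃.drop m) ?_ u₃ hu₃L _ (hWdL _) _ (hWdL _) w hw
      (hWdE _) (hWdE _) ?_ ?_
    · exact hfac u₃ hu₃L _ (List.take_prefix m u₃).isInfix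
    · exact hfac u₃ hu₃L _ (List.drop_suffix m u₃).isInfix
    · rw [hwx, hu₃E]
    · rw [List.take_append_drop]
      exact MFT_self u₃
  have keyn : ∀ m : ℕ, wdist π₂
      (evalW π₂ ((Wd (φ (evalW π₁ (u₃.take m))) ++ Wd (φ (evalW π₁ (u₃.drop m)))).take n))
      (evalW π₂ (w.take n)) ≤ Q := by
    intro m
    exact_mod_cast le_trans ((key m).1 n) hQ
  by_cases h0 : n < (Wd (1 : G)).length
  · refine ⟨φ g, MonoidHom.mem_range.mpr ⟨g, rfl⟩, ?_⟩
    have hK := keyn 0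
    rw [List.take_zero, List.drop_zero, evalW_nil, map_one,
      List.take_append_of_le_length (le_of_lt h0)] at hK
    have h2 : wdist π₂ (evalW π₂ ((Wd 1).take n)) 1 ≤ (Wd 1).length := by
      have ht := wdist_take (π := π₂) (Wd 1) n
      rwa [hWdE 1] at ht
    have h1 := le_trans (le_of_eq
      (wdist_comm hrep (evalW π₂ (w.take n)) (evalW π₂ ((Wd 1).take n)))) hK
    have hfin := le_trans (wdist_triangle hrep (evalW π₂ (w.take n))
      (evalW π₂ ((Wd 1).take n)) 1) (Nat.add_le_add h1 h2)
    have hml := wdist_mul_left (π := π₂) (φ g) (evalW π₂ (w.take n)) 1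
    rw [mul_one] at hml
    rw [hml]
    exact le_trans hfin (Nat.le_add_right _ _)
  · obtain ⟨m₀, hm₀P, hm₀le, hm₀max⟩ :
        ∃ m₀ : ℕ, (Wd (φ (evalW π₁ (u₃.take m₀)))).length ≤ n ∧ m₀ ≤ u₃.length ∧
          (m₀ < u₃.length → n < (Wd (φ (evalW π₁ (u₃.take (m₀ + 1))))).length) := by
      have hP0 : (Wd (φ (evalW π₁ (u₃.take 0)))).length ≤ n := by
        rw [List.take_zero, evalW_nil, map_one]
        omega
      refine ⟨Nat.findGreatest (fun m => (Wd (φ (evalW π₁ (u₃.take m)))).length ≤ n)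
        u₃.length, Nat.findGreatest_spec
          (P := fun m => (Wd (φ (evalW π₁ (u₃.take m)))).length ≤ n) (Nat.zero_le _) hP0,
        Nat.findGreatest_le _, ?_⟩
      intro hlt
      by_contra hcon
      push_neg at hcon
      exact Nat.findGreatest_is_greatest
        (P := fun m => (Wd (φ (evalW π₁ (u₃.take m)))).length ≤ n)
        (Nat.lt_succ_self _) hlt hcon
    by_cases hlt : m₀ < u₃.length
    · have hm2 := hm₀max hlt
      have ha : u₃.take (m₀ + 1) = u₃.take m₀ ++ [u₃[m₀]'hlt] := by
        rw [List.take_succ, List.getElem?_eq_getElem hlt]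
        rfl
      have hvm : φ (evalW π₁ (u₃.take (m₀ + 1))) =
          φ (evalW π₁ (u₃.take m₀)) * φ (π₁ (FreeMonoid.of (u₃[m₀]'hlt))) := by
        rw [ha, evalW_append, evalW_singleton, map_mul]
      have hdistC : wdist π₂ (φ (evalW π₁ (u₃.take m₀)))
          (φ (evalW π₁ (u₃.take (m₀ + 1)))) ≤ C := by
        rw [hvm]
        have hml := wdist_mul_left (π := π₂) (φ (evalW π₁ (u₃.take m₀))) 1
          (φ (π₁ (FreeMonoid.of (u₃[m₀]'hlt))))
        rw [mul_one] at hml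
        rw [hml]
        exact hC _
      have hchain := ft_chain hrep h₂.onto hN₂ C (Wd (φ (evalW π₁ (u₃.take m₀))))
        (Wd (φ (evalW π₁ (u₃.take (m₀ + 1))))) (hWdL _) (hWdL _)
        (by rw [hWdE, hWdE]; exact hdistC) n
      rw [List.take_of_length_le hm₀P, hWdE] at hchain
      have hK := keyn (m₀ + 1)
      rw [List.take_append_of_le_length (le_of_lt hm2)] at hK
      refine ⟨φ (g * evalW π₁ (u₃.take m₀)), MonoidHom.mem_range.mpr ⟨_, rfl⟩, ?_⟩
      rw [map_mul, wdist_mul_left (π := π₂) (φ g)]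
      have h1 := le_trans (le_of_eq (wdist_comm hrep (evalW π₂ (w.take n))
        (evalW π₂ ((Wd (φ (evalW π₁ (u₃.take (m₀ + 1))))).take n)))) hK
      have h2 := le_trans (le_of_eq (wdist_comm hrep
        (evalW π₂ ((Wd (φ (evalW π₁ (u₃.take (m₀ + 1))))).take n))
        (φ (evalW π₁ (u₃.take m₀))))) hchain
      have hfin := le_trans (wdist_triangle hrep (evalW π₂ (w.take n))
        (evalW π₂ ((Wd (φ (evalW π₁ (u₃.take (m₀ + 1))))).take n))
        (φ (evalW π₁ (u₃.take m₀)))) (Nat.add_le_add h1 h2)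
      exact le_trans hfin (Nat.add_le_add_right (Nat.le_add_right Q (Wd 1).length) _)
    · have hml' : m₀ = u₃.length := le_antisymm hm₀le (not_lt.mp hlt)
      have hlen3 : (Wd (φ (evalW π₁ u₃))).length ≤ n := by
        rw [hml', List.take_length] at hm₀P
        exact hm₀P
      have hK := keyn u₃.length
      rw [List.take_length, List.drop_length, evalW_nil, map_one,
        List.take_append, List.take_of_length_le hlen3] at hK
      refine ⟨φ g', MonoidHom.mem_range.mpr ⟨g', rfl⟩, ?_⟩
      have hgg : (φ g' : G) = φ g * φ (g⁻¹ * g') := by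
        rw [← map_mul]
        congr 1
        group
      rw [hgg, wdist_mul_left (π := π₂) (φ g)]
      have hval : evalW π₂ (Wd (φ (evalW π₁ u₃))) = φ (g⁻¹ * g') := by
        rw [hWdE, hu₃E]
      have h2 : wdist π₂ (evalW π₂ (Wd (φ (evalW π₁ u₃)) ++
          (Wd 1).take (n - (Wd (φ (evalW π₁ u₃))).length))) (φ (g⁻¹ * g')) ≤
          (Wd 1).length := by
        rw [evalW_append, hval]
        have hml := wdist_mul_left (π := π₂) (φ (g⁻¹ * g'))
          (evalW π₂ ((Wd 1).take (n - (Wd (φ (evalW π₁ u₃))).length))) 1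
        rw [mul_one] at hml
        rw [hml]
        have ht := wdist_take (π := π₂) (Wd 1) (n - (Wd (φ (evalW π₁ u₃))).length)
        rwa [hWdE 1] at ht
      have h1 := le_trans (le_of_eq (wdist_comm hrep (evalW π₂ (w.take n))
        (evalW π₂ (Wd (φ (evalW π₁ u₃)) ++
          (Wd 1).take (n - (Wd (φ (evalW π₁ u₃))).length))))) hK
      have hfin := le_trans (wdist_triangle hrep (evalW π₂ (w.take n))
        (evalW π₂ (Wd (φ (evalW π₁ u₃)) ++
          (Wd 1).take (n - (Wd (φ (evalW π₁ u₃))).length))) (φ (g⁻¹ * g')))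
        (Nat.add_le_add h1 h2)
      exact le_trans hfin (Nat.le_add_right _ _)
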